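/- Let V be a varifold (or measure) on M, G a finite group of isometries with g_#V = V for all g ∈ G. If the first variation δV vanishes on every G-equivariant vector field, then δV vanishes on every vector field. (Formally: if δV is a linear functional on vector fields satisfying δV(χ_g) = δV(χ) where χ_g = the conjugate of χ by g, and δV(X) = 0 whenever X is G-invariant, then δV(χ) = 0 for all χ, using the averaging χ_G = (1/|G|)Σ_g χ_g.) -/
import Mathlib


/-- Principle of symmetric criticality (weak form): if `δV` is a linear functional
on the space of vector fields, invariant under the conjugation action of a finite
group `G` (`δV(ρ g χ) = δV(χ)`), and `δV` vanishes on every `G`-invariant vector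
field, then `δV` vanishes identically. -/
theorem g_stationary_implies_stationary
    {W : Type*} [AddCommGroup W] [Module ℝ W]
    {G : Type*} [Group G] [Fintype G]
    (ρ : G →* (W →ₗ[ℝ] W)) (δV : W →ₗ[ℝ] ℝ)
    (hconj : ∀ (g : G) (χ : W), δV (ρ g χ) = δV χ)
    (hinv : ∀ X : W, (∀ g : G, ρ g X = X) → δV X = 0) :
    ∀ χ : W, δV χ = 0 := by
  intro χ
  set X : W := ((Fintype.card G : ℝ)⁻¹) • ∑ g : G, ρ g χ with hX
  have hninv : ∀ h : G, ρ h X = X := by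
    intro h
    rw [hX, map_smul]
    congr 1
    rw [map_sum]
    have : ∀ g : G, ρ h (ρ g χ) = ρ (h * g) χ := by
      intro g; rw [map_mul]; rfl
    simp_rw [this]
    exact Fintype.sum_equiv (Equiv.mulLeft h) _ _ (fun g => rfl)
  have h0 : δV X = 0 := hinv X hninv
  have hcard : (0 : ℝ) < (Fintype.card G : ℝ) := by
    exact_mod_cast Fintype.card_pos
  have : δV X = δV χ := by
    rw [hX, map_smul, map_sum]
    simp_rw [hconj]
    simp [Finset.sum_const, inv_mul_cancel₀ (ne_of_gt hcard)]
  rw [← this, h0]
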